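/- Let r ∈ [0, 1), set X = (r, 0) ∈ ℝ², and let P(r) = (2π)^(−3) ∫_{[0,2π]³} 𝟙[X ∈ convexHull ℝ {A(α), A(β), A(γ)}] d(α,β,γ) with A(θ) = (cos θ, sin θ). Define cross(P, Q, Y) = (Q − P)₁·(Y − P)₂ − (Q − P)₂·(Y − P)₁ and R(Y, →PQ) = 1 if cross(P, Q, Y) ≤ 0, −1 otherwise. Then P(r) = 1/4 − (3/4) · (1/(2π)) ∫₀^{2π} ( (1/(2π)) ∫₀^{2π} R(A(α), →X A(θ)) dα )² dθ. -/

import Mathlib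

open Real
open scoped Classical

/-- The point `(cos θ, sin θ)` on the unit circle in `ℝ²`. -/
noncomputable def circlePt (θ : ℝ) : EuclideanSpace ℝ (Fin 2) := WithLp.toLp 2 ![Real.cos θ, Real.sin θ]

/-- The point `(x, y)` in `ℝ²`. -/
noncomputable def pt2 (x y : ℝ) : EuclideanSpace ℝ (Fin 2) := WithLp.toLp 2 ![x, y]

/-- The cross product `(Q − P)₁·(Y − P)₂ − (Q − P)₂·(Y − P)₁` detecting on which side of the
directed line from `P` to `Q` the point `Y` lies. -/
noncomputable def cross2 (P Q Y : EuclideanSpace ℝ (Fin 2)) : ℝ :=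
  (Q - P) 0 * (Y - P) 1 - (Q - P) 1 * (Y - P) 0

/-- `R(Y, →PQ)`: equals `1` if `Y` is to the right of or on the directed line from `P` to `Q`
(`cross2 P Q Y ≤ 0`), and `-1` otherwise. -/
noncomputable def Rside (Y P Q : EuclideanSpace ℝ (Fin 2)) : ℝ :=
  if cross2 P Q Y ≤ 0 then 1 else -1


/-! For `X` strictly inside the disc, almost surely no two vertices are collinear with `X`, and
then `X` lies in the triangle `ABC` iff the orientations of `(X, A, B)`, `(X, B, C)`, `(X, C, A)`
agree. With the signs `s(θ, α) = R(A(α), →X A(θ)) = ±1` this indicator is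
`(1 + s_ab s_bc + s_bc s_ca + s_ca s_ab) / 4`. The three products are cyclic rotations of one
another, so they have the same integral, and since `s` is antisymmetric almost everywhere,
integrating `s_ca s_ab` first in `c` and then in `b` gives `-F(a)²` with
`F(θ) = ∫ s(θ, α) dα`. -/

open MeasureTheory

theorem mem_convexHull_triple {𝕜 E : Type*} [Field 𝕜] [LinearOrder 𝕜] [IsStrictOrderedRing 𝕜]
    [AddCommGroup E] [Module 𝕜 E] {A B C X : E} :
    X ∈ convexHull 𝕜 {A, B, C} ↔
      ∃ a b c : 𝕜, 0 ≤ a ∧ 0 ≤ b ∧ 0 ≤ c ∧ a + b + c = 1 ∧ a • A + b • B + c • C = X := by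
  rw [convexHull_insert (by simp), convexHull_pair, convexJoin_singleton_left]
  simp only [Set.mem_iUnion₂]
  constructor
  · rintro ⟨-, ⟨b, c, hb, hc, hbc, rfl⟩, a, t, ha, ht, hat, rfl⟩
    exact ⟨a, t * b, t * c, ha, mul_nonneg ht hb, mul_nonneg ht hc,
      by linear_combination t * hbc + hat, by module⟩
  · rintro ⟨a, b, c, ha, hb, hc, habc, rfl⟩
    rcases (add_nonneg hb hc).eq_or_lt with hbc | hbc
    · obtain ⟨rfl, rfl⟩ : b = 0 ∧ c = 0 := ⟨by linarith, by linarith⟩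
      exact ⟨B, left_mem_segment 𝕜 B C, a, 0, ha, le_rfl, by linarith, by simp⟩
    · refine ⟨(b / (b + c)) • B + (c / (b + c)) • C,
        ⟨_, _, by positivity, by positivity, by field_simp, rfl⟩,
        a, b + c, ha, hbc.le, by linarith, ?_⟩
      rw [smul_add, smul_smul, smul_smul, mul_div_cancel₀ _ hbc.ne', mul_div_cancel₀ _ hbc.ne',
        add_assoc]

lemma cross2_swap (X P Q : EuclideanSpace ℝ (Fin 2)) : cross2 X Q P = -cross2 X P Q := by
  simp only [cross2]; ring

lemma cross2_rotate (A B C : EuclideanSpace ℝ (Fin 2)) : cross2 B C A = cross2 A B C := by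
  simp only [cross2, PiLp.sub_apply]; ring

lemma cross2_convex_combination {A B C : EuclideanSpace ℝ (Fin 2)} {a b c : ℝ}
    (h : a + b + c = 1) :
    cross2 (a • A + b • B + c • C) B C = a * cross2 A B C := by
  simp only [cross2, PiLp.sub_apply, PiLp.add_apply, PiLp.smul_apply, smul_eq_mul]
  rw [show a = 1 - b - c by linarith]; ring

lemma cross2_smul_add (A B C X : EuclideanSpace ℝ (Fin 2)) :
    cross2 X B C • A + cross2 X C A • B + cross2 X A B • C =
      (cross2 X B C + cross2 X C A + cross2 X A B) • X := by
  ext i; fin_cases i <;> simp [cross2] <;> ring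

theorem mem_convexHull_triple_iff_cross2 {A B C X : EuclideanSpace ℝ (Fin 2)}
    (hA : cross2 X B C ≠ 0) (hB : cross2 X C A ≠ 0) (hC : cross2 X A B ≠ 0) :
    X ∈ convexHull ℝ {A, B, C} ↔
      (0 < cross2 X B C ∧ 0 < cross2 X C A ∧ 0 < cross2 X A B) ∨
        (cross2 X B C < 0 ∧ cross2 X C A < 0 ∧ cross2 X A B < 0) := by
  rw [mem_convexHull_triple]
  constructor
  · rintro ⟨a, b, c, ha, hb, hc, habc, rfl⟩
    have h₁ : cross2 (a • A + b • B + c • C) B C = a * cross2 A B C :=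
      cross2_convex_combination habc
    have h₂ : cross2 (a • A + b • B + c • C) C A = b * cross2 A B C := by
      rw [show a • A + b • B + c • C = b • B + c • C + a • A by abel, ← cross2_rotate A]
      exact cross2_convex_combination (by linarith)
    have h₃ : cross2 (a • A + b • B + c • C) A B = c * cross2 A B C := by
      rw [show a • A + b • B + c • C = c • C + a • A + b • B by abel, cross2_rotate C A B]
      exact cross2_convex_combination (by linarith)
    rw [h₁] at hA ⊢
    rw [h₂] at hB ⊢
    rw [h₃] at hC ⊢
    have ha' := (left_ne_zero_of_mul hA).symm.lt_of_le ha
    have hb' := (left_ne_zero_of_mul hB).symm.lt_of_le hb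
    have hc' := (left_ne_zero_of_mul hC).symm.lt_of_le hc
    rcases (right_ne_zero_of_mul hA).lt_or_gt with hD | hD
    · exact .inr ⟨mul_neg_of_pos_of_neg ha' hD, mul_neg_of_pos_of_neg hb' hD,
        mul_neg_of_pos_of_neg hc' hD⟩
    · exact .inl ⟨mul_pos ha' hD, mul_pos hb' hD, mul_pos hc' hD⟩
  · intro hsign
    set D := cross2 X B C + cross2 X C A + cross2 X A B
    have hcoeff : 0 < cross2 X B C / D ∧ 0 < cross2 X C A / D ∧ 0 < cross2 X A B / D := by
      rcases hsign with ⟨h₁, h₂, h₃⟩ | ⟨h₁, h₂, h₃⟩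
      · have hD : 0 < D := by positivity
        exact ⟨div_pos h₁ hD, div_pos h₂ hD, div_pos h₃ hD⟩
      · have hD : D < 0 := by simp only [D]; linarith
        exact ⟨div_pos_of_neg_of_neg h₁ hD, div_pos_of_neg_of_neg h₂ hD,
          div_pos_of_neg_of_neg h₃ hD⟩
    have hD : D ≠ 0 := fun h => by simp [h] at hcoeff
    refine ⟨_, _, _, hcoeff.1.le, hcoeff.2.1.le, hcoeff.2.2.le,
      by rw [← add_div, ← add_div, div_self hD], ?_⟩
    simp only [div_eq_inv_mul, mul_smul]
    rw [← smul_add, ← smul_add, cross2_smul_add, smul_smul, inv_mul_cancel₀ hD, one_smul]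

noncomputable def sideSign (x : ℝ) : ℝ := if x ≤ 0 then 1 else -1

lemma Rside_eq_sideSign (Y P Q : EuclideanSpace ℝ (Fin 2)) :
    Rside Y P Q = sideSign (cross2 P Q Y) := rfl

lemma abs_sideSign (x : ℝ) : |sideSign x| = 1 := by
  unfold sideSign; split_ifs <;> simp

lemma measurable_sideSign : Measurable sideSign :=
  Measurable.ite measurableSet_Iic measurable_const measurable_const

lemma sideSign_neg {x : ℝ} (hx : x ≠ 0) : sideSign (-x) = -sideSign x := by
  rcases hx.lt_or_gt with hx | hx <;> simp [sideSign, hx.le, hx.not_ge]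

lemma ite_same_sign_eq_sideSign {x y z : ℝ} (hx : x ≠ 0) (hy : y ≠ 0) (hz : z ≠ 0) :
    (if (0 < x ∧ 0 < y ∧ 0 < z) ∨ (x < 0 ∧ y < 0 ∧ z < 0) then (1 : ℝ) else 0) =
      (1 + sideSign x * sideSign y + sideSign y * sideSign z + sideSign z * sideSign x) / 4 := by
  rcases hx.lt_or_gt with hx | hx <;> rcases hy.lt_or_gt with hy | hy <;>
    rcases hz.lt_or_gt with hz | hz <;>
    simp [sideSign, hx, hy, hz, hx.le, hy.le, hz.le, hx.not_ge, hy.not_ge, hz.not_ge,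
      hx.not_gt, hy.not_gt, hz.not_gt] <;> norm_num

section TripleProduct

variable {α E : Type*} [MeasurableSpace α] [NormedAddCommGroup E] [NormedSpace ℝ E]

theorem integral_prod_prod {β γ : Type*} [MeasurableSpace β] [MeasurableSpace γ]
    {μ : Measure α} {ν : Measure β} {ρ : Measure γ} [SFinite μ] [SFinite ν] [SFinite ρ]
    {f : α × β × γ → E} (hf : Integrable f (μ.prod (ν.prod ρ))) :
    ∫ p, f p ∂μ.prod (ν.prod ρ) = ∫ a, ∫ b, ∫ c, f (a, b, c) ∂ρ ∂ν ∂μ := by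
  rw [integral_prod f hf]
  refine integral_congr_ae ?_
  filter_upwards [hf.prod_right_ae] with a ha using integral_prod _ ha

theorem integral_comp_rotate_prod_prod (μ : Measure α) [SFinite μ] (f : α × α × α → E) :
    ∫ p, f (p.2.1, p.2.2, p.1) ∂μ.prod (μ.prod μ) = ∫ p, f p ∂μ.prod (μ.prod μ) :=
  ((measurePreserving_prodAssoc μ μ μ).comp Measure.measurePreserving_swap).integral_comp'
    (f := MeasurableEquiv.prodComm.trans MeasurableEquiv.prodAssoc) f

theorem integral_cyclic_products_of_antisymm {μ : Measure α} [IsFiniteMeasure μ]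
    {g : α → α → ℝ} (hg : Measurable fun p : α × α => g p.1 p.2) {C : ℝ}
    (hC : ∀ x y, |g x y| ≤ C) (hanti : ∀ x, ∀ᵐ y ∂μ, g y x = -g x y) :
    ∫ a, ∫ b, ∫ c, (1 + g a b * g b c + g b c * g c a + g c a * g a b) ∂μ ∂μ ∂μ =
      μ.real Set.univ ^ 3 - 3 * ∫ x, (∫ y, g x y ∂μ) ^ 2 ∂μ := by
  have hbdd : ∀ x y z w, ‖g x y * g z w‖ ≤ C * C := fun x y z w => by
    rw [Real.norm_eq_abs, abs_mul]
    exact mul_le_mul (hC _ _) (hC _ _) (abs_nonneg _) ((abs_nonneg _).trans (hC x y))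
  have hint₁ : Integrable (fun p : α × α × α => g p.1 p.2.1 * g p.2.1 p.2.2)
      (μ.prod (μ.prod μ)) := .of_bound (by fun_prop) _ (.of_forall fun _ => hbdd _ _ _ _)
  have hint₂ : Integrable (fun p : α × α × α => g p.2.1 p.2.2 * g p.2.2 p.1)
      (μ.prod (μ.prod μ)) := .of_bound (by fun_prop) _ (.of_forall fun _ => hbdd _ _ _ _)
  have hint₃ : Integrable (fun p : α × α × α => g p.2.2 p.1 * g p.1 p.2.1)
      (μ.prod (μ.prod μ)) := .of_bound (by fun_prop) _ (.of_forall fun _ => hbdd _ _ _ _)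
  have hint₀₁ : Integrable (fun p : α × α × α => 1 + g p.1 p.2.1 * g p.2.1 p.2.2)
      (μ.prod (μ.prod μ)) := (integrable_const 1).add hint₁
  have hint₀₁₂ : Integrable (fun p : α × α × α => 1 + g p.1 p.2.1 * g p.2.1 p.2.2 +
      g p.2.1 p.2.2 * g p.2.2 p.1) (μ.prod (μ.prod μ)) := hint₀₁.add hint₂
  have hint : Integrable (fun p : α × α × α => 1 + g p.1 p.2.1 * g p.2.1 p.2.2 +
      g p.2.1 p.2.2 * g p.2.2 p.1 + g p.2.2 p.1 * g p.1 p.2.1) (μ.prod (μ.prod μ)) :=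
    hint₀₁₂.add hint₃
  have hrev : ∀ x, ∫ y, g y x ∂μ = -∫ y, g x y ∂μ := fun x => by
    rw [← integral_neg]; exact integral_congr_ae (hanti x)
  have h₃ : ∫ p, g p.2.2 p.1 * g p.1 p.2.1 ∂μ.prod (μ.prod μ) =
      -∫ x, (∫ y, g x y ∂μ) ^ 2 ∂μ := by
    rw [integral_prod_prod hint₃, ← integral_neg]
    congr with x
    simp only [integral_mul_const, hrev, integral_const_mul]
    ring
  have h₁ := integral_comp_rotate_prod_prod μ fun p => g p.2.2 p.1 * g p.1 p.2.1
  have h₂ := integral_comp_rotate_prod_prod μ fun p => g p.1 p.2.1 * g p.2.1 p.2.2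
  rw [← integral_prod_prod hint, integral_add hint₀₁₂ hint₃, integral_add hint₀₁ hint₂,
    integral_add (integrable_const 1) hint₁, h₂, h₁, h₃, integral_const, smul_eq_mul, mul_one,
    ← Set.univ_prod_univ, measureReal_prod_prod, ← Set.univ_prod_univ, measureReal_prod_prod]
  ring

end TripleProduct

lemma cross2_circlePt (X : EuclideanSpace ℝ (Fin 2)) (θ α : ℝ) :
    cross2 X (circlePt θ) (circlePt α) =
      (cos θ - X 0) * (sin α - X 1) - (sin θ - X 1) * (cos α - X 0) := by
  simp [cross2, circlePt]

section Circle

variable {X : EuclideanSpace ℝ (Fin 2)}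

theorem ae_cross2_circlePt_ne_zero (hX : ‖X‖ < 1) (θ : ℝ) :
    ∀ᵐ α, cross2 X (circlePt θ) (circlePt α) ≠ 0 := by
  have hX' : X 0 ^ 2 + X 1 ^ 2 < 1 := by
    rw [EuclideanSpace.norm_eq, Fin.sum_univ_two, Real.sqrt_lt' one_pos] at hX
    simpa using hX
  -- vanishing at `α = 0, π / 2, π` would force `circlePt θ = X`
  obtain ⟨α₀, hα₀⟩ : ∃ α, cross2 X (circlePt θ) (circlePt α) ≠ 0 := by
    by_contra! h
    have h₀ := h 0
    have h₁ := h (π / 2)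
    have h₂ := h π
    simp only [cross2_circlePt, cos_zero, sin_zero, cos_pi_div_two, sin_pi_div_two, cos_pi,
      sin_pi] at h₀ h₁ h₂
    have hs : sin θ = X 1 := by linear_combination (h₂ - h₀) / 2
    have hc : cos θ = X 0 := by linear_combination h₁ - h₀ - hs
    have := sin_sq_add_cos_sq θ
    rw [hs, hc] at this
    linarith
  have hanalytic : AnalyticOnNhd ℝ (fun α => cross2 X (circlePt θ) (circlePt α)) Set.univ := by
    simp only [cross2_circlePt]; intro x _; fun_prop
  have := ae_restrict_le_codiscreteWithin (μ := volume) MeasurableSet.univ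
    (hanalytic.preimage_zero_mem_codiscrete hα₀)
  rwa [Measure.restrict_univ] at this

theorem integral_integral_integral_mem_convexHull_circlePt {μ : Measure ℝ} [IsFiniteMeasure μ]
    (hμ : μ ≪ volume) (hX : ‖X‖ < 1) :
    ∫ a, ∫ b, ∫ c, (if X ∈ convexHull ℝ {circlePt a, circlePt b, circlePt c} then (1 : ℝ) else 0)
        ∂μ ∂μ ∂μ =
      (μ.real Set.univ ^ 3 - 3 * ∫ θ, (∫ α, Rside (circlePt α) X (circlePt θ) ∂μ) ^ 2 ∂μ) / 4 := by
  have hne : ∀ θ, ∀ᵐ α ∂μ, cross2 X (circlePt θ) (circlePt α) ≠ 0 := fun θ =>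
    hμ.ae_le (ae_cross2_circlePt_ne_zero hX θ)
  have hind : ∀ a, ∀ᵐ b ∂μ, ∀ᵐ c ∂μ,
      (if X ∈ convexHull ℝ {circlePt a, circlePt b, circlePt c} then (1 : ℝ) else 0) =
        (1 + Rside (circlePt b) X (circlePt a) * Rside (circlePt c) X (circlePt b) +
          Rside (circlePt c) X (circlePt b) * Rside (circlePt a) X (circlePt c) +
          Rside (circlePt a) X (circlePt c) * Rside (circlePt b) X (circlePt a)) / 4 := by
    intro a
    filter_upwards [hne a] with b hab
    filter_upwards [hne b, hne a] with c hbc hac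
    have hca : cross2 X (circlePt c) (circlePt a) ≠ 0 := by
      rwa [cross2_swap, neg_ne_zero]
    rw [(if_congr (mem_convexHull_triple_iff_cross2 hbc hca hab) rfl rfl).trans
      (ite_same_sign_eq_sideSign hbc hca hab)]
    simp only [Rside_eq_sideSign]
    ring
  have hg : Measurable fun p : ℝ × ℝ => Rside (circlePt p.2) X (circlePt p.1) :=
    measurable_sideSign.comp (by simp only [cross2_circlePt]; fun_prop)
  have hanti : ∀ θ, ∀ᵐ α ∂μ,
      Rside (circlePt θ) X (circlePt α) = -Rside (circlePt α) X (circlePt θ) :=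
    fun θ => (hne θ).mono fun α h => by
      rw [Rside_eq_sideSign, Rside_eq_sideSign, cross2_swap, sideSign_neg h]
  rw [integral_congr_ae (.of_forall fun a => integral_congr_ae ((hind a).mono fun b hb =>
    integral_congr_ae hb))]
  simp only [integral_div]
  rw [integral_cyclic_products_of_antisymm (g := fun θ α => Rside (circlePt α) X (circlePt θ))
    hg (fun _ _ => (abs_sideSign _).le) hanti]

end Circle

theorem prob_eq_quarter_sub_integral_sq (r : ℝ) (hr : r ∈ Set.Ico (0:ℝ) 1) :
    (2*π)⁻¹^3 * (∫ α in (0:ℝ)..(2*π), ∫ β in (0:ℝ)..(2*π), ∫ γ in (0:ℝ)..(2*π),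
      if pt2 r 0 ∈ convexHull ℝ {circlePt α, circlePt β, circlePt γ} then (1:ℝ) else 0)
    = 1/4 - 3/4 * ((2*π)⁻¹ * ∫ θ in (0:ℝ)..(2*π),
        ((2*π)⁻¹ * ∫ α in (0:ℝ)..(2*π), Rside (circlePt α) (pt2 r 0) (circlePt θ))^2) := by
  have h2π : (0 : ℝ) ≤ 2 * π := by positivity
  have hX : ‖pt2 r 0‖ < 1 := by
    rw [EuclideanSpace.norm_eq, Fin.sum_univ_two, Real.sqrt_lt' one_pos]
    simpa [pt2] using abs_lt.2 ⟨by linarith [hr.1], hr.2⟩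
  simp only [intervalIntegral.integral_of_le h2π, mul_pow, integral_const_mul]
  rw [integral_integral_integral_mem_convexHull_circlePt
      Measure.restrict_le_self.absolutelyContinuous hX,
    measureReal_restrict_apply_univ, Real.volume_real_Ioc_of_le h2π, sub_zero]
  field_simp
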